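/- Let Λ be a strongly connected finite k-graph, and suppose v ∈ Λ^0 and m, n ∈ ℕ^k satisfy σ^m(x) = σ^n(x) for all x ∈ Z(v). Then for each μ ∈ Λ^m there exists a unique element θ_{m,n}(μ) ∈ Λ^n such that μx = θ_{m,n}(μ)x for all x ∈ Z(s(μ)), and the resulting map θ_{m,n} : Λ^m → Λ^n satisfies r(θ_{m,n}(μ)) = r(μ) and s(θ_{m,n}(μ)) = s(μ) for all μ ∈ Λ^m. -/

import Mathlib

/-- A higher-rank graph (`k`-graph): a countable category with a degree functor
`d : Λ → ℕ^k` satisfying the unique factorisation property.  Morphisms are called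
paths; the vertices are the paths of degree `0` (the identity morphisms).
`r` and `s` are the codomain (range) and domain (source) maps.  By convention
`Λ^{e_i} ≠ ∅` for each standard generator `e_i` of `ℕ^k`. -/
structure KGraph (k : ℕ) where
  Path : Type
  countable : Countable Path
  d : Path → Fin k → ℕ
  r : Path → Path
  s : Path → Path
  d_r : ∀ lam, d (r lam) = 0
  d_s : ∀ lam, d (s lam) = 0
  r_vertex : ∀ v, d v = 0 → r v = v
  s_vertex : ∀ v, d v = 0 → s v = v
  comp : ∀ μ ν : Path, s μ = r ν → Path
  r_comp : ∀ μ ν h, r (comp μ ν h) = r μ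
  s_comp : ∀ μ ν h, s (comp μ ν h) = s ν
  d_comp : ∀ μ ν h, d (comp μ ν h) = d μ + d ν
  id_comp : ∀ lam (h : s (r lam) = r lam), comp (r lam) lam h = lam
  comp_id : ∀ lam (h : s lam = r (s lam)), comp lam (s lam) h = lam
  assoc : ∀ μ ν τ (h1 : s μ = r ν) (h2 : s ν = r τ)
      (h3 : s (comp μ ν h1) = r τ) (h4 : s μ = r (comp ν τ h2)),
      comp (comp μ ν h1) τ h3 = comp μ (comp ν τ h2) h4
  factor : ∀ (lam : Path) (m n : Fin k → ℕ), d lam = m + n →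
      ∃! μν : Path × Path, ∃ h : s μν.1 = r μν.2,
        d μν.1 = m ∧ d μν.2 = n ∧ comp μν.1 μν.2 h = lam
  edge_nonempty : ∀ i : Fin k, ∃ lam, d lam = Pi.single i 1

namespace KGraph

variable {k : ℕ}

/-- The vertices of a `k`-graph: the paths of degree `0`. -/
abbrev Vertex (Λ : KGraph k) : Type := {v : Λ.Path // Λ.d v = 0}

/-- A `k`-graph is finite if `Λ^n` is finite for every `n ∈ ℕ^k`. -/
def IsFinite (Λ : KGraph k) : Prop := ∀ n : Fin k → ℕ, {lam : Λ.Path | Λ.d lam = n}.Finite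

/-- A `k`-graph is strongly connected if `vΛw ≠ ∅` for all vertices `v, w`. -/
def StronglyConnected (Λ : KGraph k) : Prop :=
  ∀ v w : Λ.Path, Λ.d v = 0 → Λ.d w = 0 → ∃ lam : Λ.Path, Λ.r lam = v ∧ Λ.s lam = w

/-- `Λ^min(μ,ν) = {(α,β) : μα = νβ, d(μα) = d(μ) ∨ d(ν)}`. -/
def minSet (Λ : KGraph k) (μ ν : Λ.Path) : Set (Λ.Path × Λ.Path) :=
  {p | ∃ (h1 : Λ.s μ = Λ.r p.1) (h2 : Λ.s ν = Λ.r p.2),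
      Λ.comp μ p.1 h1 = Λ.comp ν p.2 h2 ∧ Λ.d μ + Λ.d p.1 = Λ.d μ ⊔ Λ.d ν}

end KGraph

/-- An infinite path in a `k`-graph `Λ`: a degree-preserving functor `x : Ω_k → Λ`,
recorded by its values `x(m,n)` for `m ≤ n` in `ℕ^k`. -/
structure InfinitePath {k : ℕ} (Λ : KGraph k) where
  toFun : ∀ m n : Fin k → ℕ, m ≤ n → Λ.Path
  d_eq : ∀ m n h, Λ.d (toFun m n h) = n - m
  src : ∀ m n h, Λ.s (toFun m n h) = toFun n n le_rfl
  rng : ∀ m n h, Λ.r (toFun m n h) = toFun m m le_rfl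
  comp_eq : ∀ m n p (h1 : m ≤ n) (h2 : n ≤ p)
      (hc : Λ.s (toFun m n h1) = Λ.r (toFun n p h2)),
      Λ.comp (toFun m n h1) (toFun n p h2) hc = toFun m p (h1.trans h2)

namespace InfinitePath

variable {k : ℕ} {Λ : KGraph k}

/-- The shift map `σ^n` on the infinite-path space, `σ^n(x)(p,q) = x(n+p, n+q)`. -/
def shift (x : InfinitePath Λ) (n : Fin k → ℕ) : InfinitePath Λ where
  toFun p q h := x.toFun (n + p) (n + q) (by gcongr)
  d_eq p q h := by
    rw [x.d_eq]
    funext i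
    exact Nat.add_sub_add_left (n i) (q i) (p i)
  src p q h := x.src _ _ _
  rng p q h := x.rng _ _ _
  comp_eq p q t h1 h2 hc := x.comp_eq _ _ _ _ _ hc

/-- The range `r(x) = x(0,0)` of an infinite path. -/
def range (x : InfinitePath Λ) : Λ.Path := x.toFun 0 0 le_rfl

end InfinitePath

/-- `ExtEq Λ lam y x` says that `y = lam · x`, i.e. `y(0, d(lam)) = lam` and
`σ^{d(lam)}(y) = x`.  (Such an extension is unique when it exists.) -/
def KGraph.ExtEq {k : ℕ} (Λ : KGraph k) (lam : Λ.Path) (y x : InfinitePath Λ) : Prop :=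
  y.toFun 0 (Λ.d lam) (fun i => Nat.zero_le _) = lam ∧ y.shift (Λ.d lam) = x

/-- `Λ.IsTheta m n μ ν` says that `μ ∈ Λ^m`, `ν ∈ Λ^n`, and `μx = νx` for every
infinite path `x ∈ Z(s(μ))`; i.e. `ν = θ_{m,n}(μ)`. -/
def KGraph.IsTheta {k : ℕ} (Λ : KGraph k) (m n : Fin k → ℕ) (μ ν : Λ.Path) : Prop :=
  Λ.d μ = m ∧ Λ.d ν = n ∧
    ∀ x : InfinitePath Λ, x.range = Λ.s μ →
      ∃ y : InfinitePath Λ, Λ.ExtEq μ y x ∧ Λ.ExtEq ν y x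

/-- The periodicity group `Per Λ = {m − n : σ^m(x) = σ^n(x) for all x ∈ Λ^∞} ⊆ ℤ^k`. -/
def KGraph.Per {k : ℕ} (Λ : KGraph k) : Set (Fin k → ℤ) :=
  {g | ∃ m n : Fin k → ℕ, (∀ i, (m i : ℤ) - n i = g i) ∧
      ∀ x : InfinitePath Λ, x.shift m = x.shift n}

/-- `Λ` is aperiodic if every vertex `v` admits `x ∈ Z(v)` with
`σ^m(x) ≠ σ^n(x)` for all `m ≠ n` in `ℕ^k`. -/
def KGraph.Aperiodic {k : ℕ} (Λ : KGraph k) : Prop :=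
  ∀ v : Λ.Path, Λ.d v = 0 → ∃ x : InfinitePath Λ, x.range = v ∧
    ∀ m n : Fin k → ℕ, m ≠ n → x.shift m ≠ x.shift n

/-!
By strong connectivity every infinite path is `σ^{d(λ)}(y)` for some `y ∈ Z(v)`, so `σ^m = σ^n`
on all of `Λ^∞`. Then `y(0,m)` determines `y(0,n)` for every infinite path `y`: choosing
`ρ ∈ Λ^n` with `s(ρ) = r(y)`, we get `y = σ^n(ρy) = σ^m(ρy)`, so `y(0,n) = (ρy)(m, m+n)` is a
segment of `(ρy)(0, n+m) = ρ y(0,m)`. Hence `θ(μ) := (μx)(0,n)` does not depend on the choice of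
`x ∈ Z(s(μ))`, and `μx = θ(μ)x` because `σ^n(μx) = σ^m(μx) = x`. Uniqueness of `θ(μ)` and the
equalities `r(θ(μ)) = r(μ)`, `s(θ(μ)) = s(μ)` come from the uniqueness of the path `μx`.
-/

namespace KGraph

variable {k : ℕ} (Λ : KGraph k)

open Classical in
/-- The factorisation `lam = lam(0,p) lam(p,d(lam))`, with junk value `(lam, s lam)` when
`p ≰ d lam`. -/
noncomputable def split (lam : Λ.Path) (p : Fin k → ℕ) : Λ.Path × Λ.Path :=
  if h : p ≤ Λ.d lam then
    (Λ.factor lam p (Λ.d lam - p) (add_tsub_cancel_of_le h).symm).exists.choose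
  else (lam, Λ.s lam)

noncomputable def lead (lam : Λ.Path) (p : Fin k → ℕ) : Λ.Path := (Λ.split lam p).1

noncomputable def rest (lam : Λ.Path) (p : Fin k → ℕ) : Λ.Path := (Λ.split lam p).2

variable {Λ}

lemma split_spec {lam : Λ.Path} {p : Fin k → ℕ} (h : p ≤ Λ.d lam) :
    ∃ hc : Λ.s (Λ.lead lam p) = Λ.r (Λ.rest lam p), Λ.d (Λ.lead lam p) = p ∧
      Λ.d (Λ.rest lam p) = Λ.d lam - p ∧ Λ.comp (Λ.lead lam p) (Λ.rest lam p) hc = lam := by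
  unfold lead rest split
  rw [dif_pos h]
  exact (Λ.factor lam p _ (add_tsub_cancel_of_le h).symm).exists.choose_spec

lemma eq_lead_rest {lam a b : Λ.Path} {p : Fin k → ℕ} (hc : Λ.s a = Λ.r b) (ha : Λ.d a = p)
    (hab : Λ.comp a b hc = lam) : a = Λ.lead lam p ∧ b = Λ.rest lam p := by
  have hd : Λ.d lam = p + Λ.d b := by rw [← hab, Λ.d_comp, ha]
  have hp : p ≤ Λ.d lam := hd ▸ le_self_add
  have hb : Λ.d b = Λ.d lam - p := by rw [hd, add_tsub_cancel_left]
  have := (Λ.factor lam p (Λ.d lam - p) (add_tsub_cancel_of_le hp).symm).unique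
    (y₁ := (a, b)) ⟨hc, ha, hb, hab⟩ (split_spec hp)
  exact Prod.ext_iff.mp this

section

variable {lam : Λ.Path} {p : Fin k → ℕ}

lemma s_lead_eq_r_rest (h : p ≤ Λ.d lam) : Λ.s (Λ.lead lam p) = Λ.r (Λ.rest lam p) :=
  (split_spec h).1

lemma d_lead (h : p ≤ Λ.d lam) : Λ.d (Λ.lead lam p) = p := (split_spec h).2.1

lemma d_rest (h : p ≤ Λ.d lam) : Λ.d (Λ.rest lam p) = Λ.d lam - p := (split_spec h).2.2.1

lemma comp_lead_rest (h : p ≤ Λ.d lam) :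
    Λ.comp (Λ.lead lam p) (Λ.rest lam p) (s_lead_eq_r_rest h) = lam :=
  (split_spec h).2.2.2

lemma r_lead (h : p ≤ Λ.d lam) : Λ.r (Λ.lead lam p) = Λ.r lam := by
  conv_rhs => rw [← comp_lead_rest h, Λ.r_comp]

lemma s_rest (h : p ≤ Λ.d lam) : Λ.s (Λ.rest lam p) = Λ.s lam := by
  conv_rhs => rw [← comp_lead_rest h, Λ.s_comp]

end

lemma lead_comp_of_d_eq {a b : Λ.Path} (hc : Λ.s a = Λ.r b) {p : Fin k → ℕ} (ha : Λ.d a = p) :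
    Λ.lead (Λ.comp a b hc) p = a := (eq_lead_rest hc ha rfl).1.symm

lemma rest_comp_of_d_eq {a b : Λ.Path} (hc : Λ.s a = Λ.r b) {p : Fin k → ℕ} (ha : Λ.d a = p) :
    Λ.rest (Λ.comp a b hc) p = b := (eq_lead_rest hc ha rfl).2.symm

lemma lead_zero (lam : Λ.Path) : Λ.lead lam 0 = Λ.r lam :=
  (eq_lead_rest _ (Λ.d_r lam) (Λ.id_comp lam (Λ.s_vertex _ (Λ.d_r lam)))).1.symm

lemma rest_zero (lam : Λ.Path) : Λ.rest lam 0 = lam :=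
  (eq_lead_rest _ (Λ.d_r lam) (Λ.id_comp lam (Λ.s_vertex _ (Λ.d_r lam)))).2.symm

lemma rest_d_self (lam : Λ.Path) : Λ.rest lam (Λ.d lam) = Λ.s lam :=
  (eq_lead_rest _ rfl (Λ.comp_id lam (Λ.r_vertex _ (Λ.d_s lam)).symm)).2.symm

lemma lead_comp_rest_comp {a b : Λ.Path} (hc : Λ.s a = Λ.r b) {p : Fin k → ℕ}
    (hp : p ≤ Λ.d a) :
    Λ.lead (Λ.comp a b hc) p = Λ.lead a p ∧
      Λ.rest (Λ.comp a b hc) p = Λ.comp (Λ.rest a p) b ((s_rest hp).trans hc) := by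
  have hab : Λ.comp (Λ.lead a p) (Λ.comp (Λ.rest a p) b ((s_rest hp).trans hc))
      (by rw [Λ.r_comp]; exact s_lead_eq_r_rest hp) = Λ.comp a b hc := by
    rw [← Λ.assoc _ _ _ (s_lead_eq_r_rest hp) _ (by rw [Λ.s_comp, s_rest hp]; exact hc)]
    simp only [comp_lead_rest hp]
  obtain ⟨h1, h2⟩ := eq_lead_rest _ (d_lead hp) hab
  exact ⟨h1.symm, h2.symm⟩

lemma lead_lead {lam : Λ.Path} {p q : Fin k → ℕ} (hpq : p ≤ q) (hq : q ≤ Λ.d lam) :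
    Λ.lead (Λ.lead lam q) p = Λ.lead lam p := by
  conv_rhs => rw [← comp_lead_rest hq]
  exact (lead_comp_rest_comp _ ((d_lead hq).symm ▸ hpq)).1.symm

end KGraph

namespace InfinitePath

variable {k : ℕ} {Λ : KGraph k}

@[ext]
lemma ext {x y : InfinitePath Λ} (h : ∀ p q (hpq : p ≤ q), x.toFun p q hpq = y.toFun p q hpq) :
    x = y := by
  cases x; cases y
  congr
  funext p q hpq
  exact h p q hpq

lemma toFun_congr (x : InfinitePath Λ) {p q p' q' : Fin k → ℕ} (hp : p = p') (hq : q = q')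
    (h : p ≤ q) : x.toFun p q h = x.toFun p' q' (hp ▸ hq ▸ h) := by
  subst hp hq; rfl

lemma d_toFun_zero (x : InfinitePath Λ) (q : Fin k → ℕ) :
    Λ.d (x.toFun 0 q zero_le) = q := by
  rw [x.d_eq, tsub_zero]

lemma r_toFun_zero (x : InfinitePath Λ) (q : Fin k → ℕ) :
    Λ.r (x.toFun 0 q zero_le) = x.range := x.rng _ _ _

lemma d_range (x : InfinitePath Λ) : Λ.d x.range = 0 := x.d_toFun_zero 0

lemma range_shift (x : InfinitePath Λ) (p : Fin k → ℕ) :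
    (x.shift p).range = x.toFun p p le_rfl :=
  x.toFun_congr (add_zero p) (add_zero p) _

lemma shift_shift (x : InfinitePath Λ) (p q : Fin k → ℕ) :
    (x.shift p).shift q = x.shift (p + q) := by
  ext a b hab
  exact x.toFun_congr (add_assoc p q a).symm (add_assoc p q b).symm _

lemma lead_toFun_zero (x : InfinitePath Λ) {p q : Fin k → ℕ} (hpq : p ≤ q) :
    Λ.lead (x.toFun 0 q zero_le) p = x.toFun 0 p zero_le ∧
      Λ.rest (x.toFun 0 q zero_le) p = x.toFun p q hpq := by
  have hc : Λ.s (x.toFun 0 p zero_le) = Λ.r (x.toFun p q hpq) := by rw [x.src, x.rng]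
  obtain ⟨h1, h2⟩ := KGraph.eq_lead_rest hc (x.d_toFun_zero p) (x.comp_eq 0 p q _ hpq hc)
  exact ⟨h1.symm, h2.symm⟩

lemma toFun_eq_of_toFun_zero_eq {x y : InfinitePath Λ} {p q c : Fin k → ℕ} (hpq : p ≤ q)
    (hqc : q ≤ c) (h : x.toFun 0 c zero_le = y.toFun 0 c zero_le) :
    x.toFun p q hpq = y.toFun p q hpq := by
  rw [← (x.lead_toFun_zero hpq).2, ← (y.lead_toFun_zero hpq).2, ← (x.lead_toFun_zero hqc).1,
    ← (y.lead_toFun_zero hqc).1, h]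

noncomputable def ofPrefixes (f : (Fin k → ℕ) → Λ.Path) (hd : ∀ q, Λ.d (f q) = q)
    (hf : ∀ p q, p ≤ q → Λ.lead (f q) p = f p) : InfinitePath Λ where
  toFun p q _ := Λ.rest (f q) p
  d_eq p q hpq := by rw [KGraph.d_rest ((hd q).symm ▸ hpq), hd]
  src p q hpq := by
    rw [KGraph.s_rest ((hd q).symm ▸ hpq), ← KGraph.rest_d_self, hd]
  rng p q hpq := by
    rw [← KGraph.s_lead_eq_r_rest ((hd q).symm ▸ hpq), hf p q hpq, ← KGraph.rest_d_self, hd]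
  comp_eq p q t hpq hqt hc := by
    have hft := KGraph.comp_lead_rest ((hd t).symm ▸ hqt)
    simp only [hf q t hqt] at hft
    conv_rhs => rw [← hft]
    exact (KGraph.lead_comp_rest_comp _ ((hd q).symm ▸ hpq)).2.symm

lemma ofPrefixes_toFun_zero (f : (Fin k → ℕ) → Λ.Path) (hd : ∀ q, Λ.d (f q) = q)
    (hf : ∀ p q, p ≤ q → Λ.lead (f q) p = f p) (q : Fin k → ℕ) :
    (ofPrefixes f hd hf).toFun 0 q zero_le = f q :=
  KGraph.rest_zero (f q)

end InfinitePath

namespace KGraph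

variable {k : ℕ} {Λ : KGraph k}

open InfinitePath

lemma s_eq_r_toFun_zero {lam : Λ.Path} {x : InfinitePath Λ} (hx : x.range = Λ.s lam)
    (q : Fin k → ℕ) : Λ.s lam = Λ.r (x.toFun 0 q zero_le) := by
  rw [x.r_toFun_zero, hx]

lemma comp_toFun_zero_eq_comp_comp {lam : Λ.Path} {x : InfinitePath Λ} (hx : x.range = Λ.s lam)
    {p q : Fin k → ℕ} (hpq : p ≤ q) :
    Λ.comp lam (x.toFun 0 q zero_le) (s_eq_r_toFun_zero hx q) =
      Λ.comp (Λ.comp lam (x.toFun 0 p zero_le) (s_eq_r_toFun_zero hx p)) (x.toFun p q hpq)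
        (by rw [Λ.s_comp, x.src, x.rng]) := by
  rw [Λ.assoc _ _ _ _ (by rw [x.src, x.rng]) _ (by rw [Λ.r_comp, x.r_toFun_zero, hx])]
  simp only [x.comp_eq]

lemma le_d_comp_toFun_zero {lam : Λ.Path} {x : InfinitePath Λ} (hx : x.range = Λ.s lam)
    (q : Fin k → ℕ) : q ≤ Λ.d (Λ.comp lam (x.toFun 0 q zero_le) (s_eq_r_toFun_zero hx q)) := by
  rw [Λ.d_comp, x.d_toFun_zero]
  exact le_add_self

/-- The infinite path `lam x` of the paper. -/
noncomputable def extend (lam : Λ.Path) (x : InfinitePath Λ) (hx : x.range = Λ.s lam) :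
    InfinitePath Λ :=
  ofPrefixes (fun q => Λ.lead (Λ.comp lam (x.toFun 0 q zero_le) (s_eq_r_toFun_zero hx q)) q)
    (fun q => d_lead (le_d_comp_toFun_zero hx q))
    (fun p q hpq => by
      rw [lead_lead hpq (le_d_comp_toFun_zero hx q), comp_toFun_zero_eq_comp_comp hx hpq]
      exact (lead_comp_rest_comp _ (le_d_comp_toFun_zero hx p)).1)

lemma extEq_extend (lam : Λ.Path) (x : InfinitePath Λ) (hx : x.range = Λ.s lam) :
    Λ.ExtEq lam (extend lam x hx) x := by
  refine ⟨(ofPrefixes_toFun_zero _ _ _ _).trans (lead_comp_of_d_eq _ rfl), ?_⟩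
  ext p q hpq
  show Λ.rest (Λ.lead (Λ.comp lam (x.toFun 0 (Λ.d lam + q) zero_le) _) (Λ.d lam + q))
    (Λ.d lam + p) = x.toFun p q hpq
  have hd : ∀ t, Λ.d (Λ.comp lam (x.toFun 0 t zero_le) (s_eq_r_toFun_zero hx t)) = Λ.d lam + t :=
    fun t => by rw [Λ.d_comp, x.d_toFun_zero]
  rw [comp_toFun_zero_eq_comp_comp hx (le_add_self : q ≤ Λ.d lam + q), lead_comp_of_d_eq _ (hd q),
    comp_toFun_zero_eq_comp_comp hx hpq, rest_comp_of_d_eq _ (hd p)]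

lemma extEq_iff {lam : Λ.Path} {x y : InfinitePath Λ} {q : Fin k → ℕ} (hq : Λ.d lam = q) :
    Λ.ExtEq lam y x ↔ y.toFun 0 q zero_le = lam ∧ y.shift q = x := by
  subst hq
  rfl

namespace ExtEq

variable {lam : Λ.Path} {x y : InfinitePath Λ}

lemma range_eq (hE : Λ.ExtEq lam y x) : y.range = Λ.r lam := by
  rw [← hE.1, y.r_toFun_zero]

lemma range_eq_s (hE : Λ.ExtEq lam y x) : x.range = Λ.s lam := by
  rw [← hE.2, range_shift, ← y.src 0 (Λ.d lam) zero_le, hE.1]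

lemma toFun_zero_of_d_eq (hE : Λ.ExtEq lam y x) {q : Fin k → ℕ} (hq : Λ.d lam = q) :
    y.toFun 0 q zero_le = lam :=
  ((extEq_iff hq).mp hE).1

lemma toFun_zero_add (hE : Λ.ExtEq lam y x) (q : Fin k → ℕ) :
    y.toFun 0 (Λ.d lam + q) zero_le =
      Λ.comp lam (x.toFun 0 q zero_le) (s_eq_r_toFun_zero hE.range_eq_s q) := by
  have hx : y.toFun (Λ.d lam) (Λ.d lam + q) le_self_add = x.toFun 0 q zero_le := by
    rw [← hE.2]
    exact y.toFun_congr (add_zero _).symm rfl _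
  rw [← y.comp_eq 0 (Λ.d lam) (Λ.d lam + q) zero_le le_self_add (by rw [y.src, y.rng])]
  simp only [hE.1, hx]

lemma unique {y' : InfinitePath Λ} (hE : Λ.ExtEq lam y x) (hE' : Λ.ExtEq lam y' x) :
    y = y' := by
  ext p q hpq
  exact toFun_eq_of_toFun_zero_eq hpq (le_add_self : q ≤ Λ.d lam + q)
    (by rw [hE.toFun_zero_add, hE'.toFun_zero_add])

end ExtEq

lemma exists_r_eq_d_eq_single (hsc : Λ.StronglyConnected) {u : Λ.Path} (hu : Λ.d u = 0)
    (i : Fin k) : ∃ lam, Λ.r lam = u ∧ Λ.d lam = Pi.single i 1 := by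
  obtain ⟨e, he⟩ := Λ.edge_nonempty i
  obtain ⟨τ, hτr, hτs⟩ := hsc u (Λ.r e) hu (Λ.d_r e)
  have h : Pi.single i 1 ≤ Λ.d (Λ.comp τ e hτs) := by
    rw [Λ.d_comp, he]
    exact le_add_self
  exact ⟨Λ.lead _ _, by rw [r_lead h, Λ.r_comp, hτr], d_lead h⟩

lemma exists_r_eq_d_eq (hsc : Λ.StronglyConnected) (q : Fin k → ℕ) {u : Λ.Path}
    (hu : Λ.d u = 0) : ∃ lam, Λ.r lam = u ∧ Λ.d lam = q := by
  let S : AddSubmonoid (Fin k → ℕ) :=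
    { carrier := {q | ∀ u, Λ.d u = 0 → ∃ lam, Λ.r lam = u ∧ Λ.d lam = q}
      zero_mem' := fun u hu => ⟨u, Λ.r_vertex u hu, hu⟩
      add_mem' := fun {p q} hp hq u hu => by
        obtain ⟨α, hαr, hαd⟩ := hp u hu
        obtain ⟨β, hβr, hβd⟩ := hq (Λ.s α) (Λ.d_s α)
        exact ⟨Λ.comp α β hβr.symm, by rw [Λ.r_comp, hαr], by rw [Λ.d_comp, hαd, hβd]⟩ }
  suffices q ∈ S from this u hu
  induction q using Pi.single_induction with
  | zero => exact S.zero_mem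
  | add p q hp hq => exact S.add_mem hp hq
  | single i N =>
    have hN : Pi.single i N = N • (Pi.single i 1 : Fin k → ℕ) := by
      rw [← Pi.single_smul', smul_eq_mul, mul_one]
    rw [hN]
    exact S.nsmul_mem (fun u hu => exists_r_eq_d_eq_single hsc hu i) N

lemma exists_s_eq_d_eq (hsc : Λ.StronglyConnected) (q : Fin k → ℕ) {u : Λ.Path}
    (hu : Λ.d u = 0) : ∃ lam, Λ.s lam = u ∧ Λ.d lam = q := by
  obtain ⟨α, -, hαd⟩ := exists_r_eq_d_eq hsc q hu
  obtain ⟨τ, hτr, hτs⟩ := hsc (Λ.s α) u (Λ.d_s α) hu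
  have h : Λ.d τ ≤ Λ.d (Λ.comp α τ hτr.symm) := by
    rw [Λ.d_comp]
    exact le_add_self
  refine ⟨Λ.rest _ _, by rw [s_rest h, Λ.s_comp, hτs], ?_⟩
  rw [d_rest h, Λ.d_comp, add_tsub_cancel_right, hαd]

noncomputable def diagonalPath (hsc : Λ.StronglyConnected) (u : Λ.Path) : ℕ → Λ.Path
  | 0 => u
  | N + 1 =>
    Λ.comp (diagonalPath hsc u N) (exists_r_eq_d_eq hsc 1 (Λ.d_s (diagonalPath hsc u N))).choose
      (exists_r_eq_d_eq hsc 1 (Λ.d_s (diagonalPath hsc u N))).choose_spec.1.symm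

section

variable (hsc : Λ.StronglyConnected) {u : Λ.Path}

lemma r_diagonalPath (hu : Λ.d u = 0) (N : ℕ) : Λ.r (diagonalPath hsc u N) = u := by
  induction N with
  | zero => exact Λ.r_vertex u hu
  | succ N ih => rw [diagonalPath, Λ.r_comp, ih]

lemma d_diagonalPath (hu : Λ.d u = 0) (N : ℕ) : Λ.d (diagonalPath hsc u N) = fun _ => N := by
  induction N with
  | zero => exact hu
  | succ N ih =>
    rw [diagonalPath, Λ.d_comp, ih, (exists_r_eq_d_eq hsc 1 (Λ.d_s _)).choose_spec.2]
    rfl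

lemma lead_diagonalPath_of_le (hu : Λ.d u = 0) {N M : ℕ} (hNM : N ≤ M) {p : Fin k → ℕ}
    (hp : p ≤ fun _ => N) : Λ.lead (diagonalPath hsc u M) p = Λ.lead (diagonalPath hsc u N) p := by
  induction M, hNM using Nat.le_induction with
  | base => rfl
  | succ M hNM ih =>
    have hpM : p ≤ Λ.d (diagonalPath hsc u M) := by
      rw [d_diagonalPath hsc hu]
      exact fun i => (hp i).trans hNM
    rw [diagonalPath, (lead_comp_rest_comp _ hpM).1, ih]

end

lemma exists_range_eq (hsc : Λ.StronglyConnected) {u : Λ.Path} (hu : Λ.d u = 0) :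
    ∃ x : InfinitePath Λ, x.range = u := by
  have hle : ∀ q : Fin k → ℕ, q ≤ Λ.d (diagonalPath hsc u (∑ i, q i)) := fun q i => by
    rw [d_diagonalPath hsc hu]
    exact Finset.single_le_sum (fun j _ => Nat.zero_le (q j)) (Finset.mem_univ i)
  let x := InfinitePath.ofPrefixes (fun q => Λ.lead (diagonalPath hsc u (∑ i, q i)) q)
    (fun q => d_lead (hle q))
    (fun p q hpq => by
      rw [lead_lead hpq (hle q), lead_diagonalPath_of_le hsc hu
        (Finset.sum_le_sum fun i _ => hpq i) ((d_diagonalPath hsc hu _) ▸ hle p)])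
  refine ⟨x, ?_⟩
  rw [InfinitePath.range, InfinitePath.ofPrefixes_toFun_zero, lead_zero, r_diagonalPath hsc hu]

lemma shift_eq_shift_of_forall_range_eq (hsc : Λ.StronglyConnected) {v : Λ.Path}
    (hv : Λ.d v = 0) {m n : Fin k → ℕ}
    (h : ∀ x : InfinitePath Λ, x.range = v → x.shift m = x.shift n) (x : InfinitePath Λ) :
    x.shift m = x.shift n := by
  obtain ⟨lam, hr, hs⟩ := hsc v x.range hv x.d_range
  have hE := extEq_extend lam x hs.symm
  have hx : ∀ p, x.shift p = ((extend lam x hs.symm).shift p).shift (Λ.d lam) := fun p => by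
    rw [shift_shift, add_comm, ← shift_shift, hE.2]
  rw [hx m, hx n, h _ (hE.range_eq.trans hr)]

lemma toFun_zero_eq_of_shift_eq (hsc : Λ.StronglyConnected) {m n : Fin k → ℕ}
    (hper : ∀ x : InfinitePath Λ, x.shift m = x.shift n) {y z : InfinitePath Λ}
    (h : y.toFun 0 m zero_le = z.toFun 0 m zero_le) :
    y.toFun 0 n zero_le = z.toFun 0 n zero_le := by
  obtain ⟨ρ, hρs, hρd⟩ := exists_s_eq_d_eq hsc n y.d_range
  have hz : z.range = Λ.s ρ := by rw [hρs, ← y.r_toFun_zero m, h, z.r_toFun_zero]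
  have hy : y.range = Λ.s ρ := hρs.symm
  have hY := extEq_extend ρ y hy
  have hZ := extEq_extend ρ z hz
  have hYm : (extend ρ y hy).shift m = y := by rw [hper, ← hρd, hY.2]
  have hZm : (extend ρ z hz).shift m = z := by rw [hper, ← hρd, hZ.2]
  rw [← hYm, ← hZm]
  exact toFun_eq_of_toFun_zero_eq (x := extend ρ y hy) (y := extend ρ z hz)
    (p := m + 0) (q := m + n) (c := Λ.d ρ + m) (add_le_add le_rfl zero_le) (by rw [hρd, add_comm])
    (by rw [hY.toFun_zero_add, hZ.toFun_zero_add]; simp only [h])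

lemma isTheta_extend_toFun_zero (hsc : Λ.StronglyConnected) {m n : Fin k → ℕ}
    (hper : ∀ x : InfinitePath Λ, x.shift m = x.shift n) {μ : Λ.Path} (hμ : Λ.d μ = m)
    {x : InfinitePath Λ} (hx : x.range = Λ.s μ) :
    Λ.IsTheta m n μ ((extend μ x hx).toFun 0 n zero_le) := by
  have hy := extEq_extend μ x hx
  refine ⟨hμ, d_toFun_zero _ n, fun x' hx' => ⟨extend μ x' hx', extEq_extend μ x' hx', ?_⟩⟩
  have hy' := extEq_extend μ x' hx'
  rw [extEq_iff (d_toFun_zero _ n)]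
  refine ⟨toFun_zero_eq_of_shift_eq hsc hper ?_, by rw [← hper, ← hμ, hy'.2]⟩
  rw [hy'.toFun_zero_of_d_eq hμ, hy.toFun_zero_of_d_eq hμ]

lemma IsTheta.eq {m n : Fin k → ℕ} {μ ν ν' : Λ.Path} {x : InfinitePath Λ}
    (hx : x.range = Λ.s μ) (h : Λ.IsTheta m n μ ν) (h' : Λ.IsTheta m n μ ν') : ν = ν' := by
  obtain ⟨y, hμy, hνy⟩ := h.2.2 x hx
  obtain ⟨y', hμy', hνy'⟩ := h'.2.2 x hx
  rw [← hνy.toFun_zero_of_d_eq h.2.1, ← hνy'.toFun_zero_of_d_eq h'.2.1, hμy.unique hμy']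

lemma IsTheta.r_eq_and_s_eq {m n : Fin k → ℕ} {μ ν : Λ.Path} {x : InfinitePath Λ}
    (hx : x.range = Λ.s μ) (h : Λ.IsTheta m n μ ν) : Λ.r ν = Λ.r μ ∧ Λ.s ν = Λ.s μ := by
  obtain ⟨y, hμy, hνy⟩ := h.2.2 x hx
  exact ⟨hνy.range_eq.symm.trans hμy.range_eq, hνy.range_eq_s.symm.trans hx⟩

end KGraph

theorem theta_exists_unique_general {k : ℕ} (Λ : KGraph k)
    (hsc : Λ.StronglyConnected)
    (v : Λ.Path) (hv : Λ.d v = 0) (m n : Fin k → ℕ)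
    (h : ∀ x : InfinitePath Λ, x.range = v → x.shift m = x.shift n) :
    ∀ μ : Λ.Path, Λ.d μ = m →
      (∃! ν : Λ.Path, Λ.d ν = n ∧
          ∀ x : InfinitePath Λ, x.range = Λ.s μ →
            ∃ y : InfinitePath Λ, Λ.ExtEq μ y x ∧ Λ.ExtEq ν y x) ∧
      ∀ ν : Λ.Path,
        (Λ.d ν = n ∧ ∀ x : InfinitePath Λ, x.range = Λ.s μ →
            ∃ y : InfinitePath Λ, Λ.ExtEq μ y x ∧ Λ.ExtEq ν y x) →
        Λ.r ν = Λ.r μ ∧ Λ.s ν = Λ.s μ := by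
  intro μ hμ
  have hper := KGraph.shift_eq_shift_of_forall_range_eq hsc hv h
  obtain ⟨x, hx⟩ := KGraph.exists_range_eq hsc (Λ.d_s μ)
  have hθ := KGraph.isTheta_extend_toFun_zero hsc hper hμ hx
  exact ⟨⟨_, hθ.2, fun ν hν => (hθ.eq hx ⟨hμ, hν⟩).symm⟩,
    fun ν hν => KGraph.IsTheta.r_eq_and_s_eq hx ⟨hμ, hν⟩⟩

/-- If `σ^m(x) = σ^n(x)` for all `x ∈ Z(v)`, then for each `μ ∈ Λ^m` there is a unique
`θ_{m,n}(μ) ∈ Λ^n` with `μx = θ_{m,n}(μ)x` for all `x ∈ Z(s(μ))`, and the map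
`θ_{m,n}` is range- and source-preserving. -/
theorem theta_exists_unique {k : ℕ} (Λ : KGraph k)
    (hfin : Λ.IsFinite) (hsc : Λ.StronglyConnected)
    (v : Λ.Path) (hv : Λ.d v = 0) (m n : Fin k → ℕ)
    (h : ∀ x : InfinitePath Λ, x.range = v → x.shift m = x.shift n) :
    ∀ μ : Λ.Path, Λ.d μ = m →
      (∃! ν : Λ.Path, Λ.d ν = n ∧
          ∀ x : InfinitePath Λ, x.range = Λ.s μ →
            ∃ y : InfinitePath Λ, Λ.ExtEq μ y x ∧ Λ.ExtEq ν y x) ∧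
      ∀ ν : Λ.Path,
        (Λ.d ν = n ∧ ∀ x : InfinitePath Λ, x.range = Λ.s μ →
            ∃ y : InfinitePath Λ, Λ.ExtEq μ y x ∧ Λ.ExtEq ν y x) →
        Λ.r ν = Λ.r μ ∧ Λ.s ν = Λ.s μ :=
  theta_exists_unique_general Λ hsc v hv m n h
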